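/- (Lemma 2.) With probability one, liminf_{T→∞} inf over {a : ‖a‖=1} of λ_min( F_{k₁,k₂}(a)' F_{k₁,k₂}(a) / (T−(k₁+k₂)) ) ≥ inf over {a : ‖a‖=1} of λ_min(S(a)), where λ_min denotes the smallest eigenvalue of a symmetric matrix. -/

import Mathlib

/-!
For unit vectors `a` and `x`, the Rayleigh quotient `x'S_T(a)x` of the sample matrix is the
Birkhoff average, along the orbit of `τ ω`, of `(x'w(a))²`, and `x'w(a) = ∑ c_o Y_o` is a
combination of finitely many fixed square-integrable variables `Y_o` (the constant `1` and lagged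
coordinates of `z`) with coefficients `|c_o| ≤ 1`. Hence `|x'S_T(a)x - x'S(a)x|` is bounded,
uniformly in `a` and `x`, by the total deviation of the sample second moments of the `Y_o` from
their expectations, which tends to `0` almost surely by Birkhoff's pointwise ergodic theorem.
Taking the infimum over `x` and then over `a`, the quantity in the liminf converges almost surely
to `inf_a λ_min(S(a))`.

Birkhoff's theorem is derived here from the maximal ergodic theorem, proved by Garsia's argument.
-/

open MeasureTheory Filter

noncomputable section

namespace ODPC

variable {Ω : Type*} [MeasurableSpace Ω]

/-- Frobenius norm of a real matrix. -/
def frob {ι κ : Type*} [Fintype ι] [Fintype κ] (M : Matrix ι κ ℝ) : ℝ :=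
  Real.sqrt (∑ i, ∑ j, (M i j) ^ 2)

/-- Smallest eigenvalue of a symmetric real matrix, via the Rayleigh quotient. -/
def lambdaMin {n : ℕ} (M : Matrix (Fin n) (Fin n) ℝ) : ℝ :=
  ⨅ x : { x : EuclideanSpace ℝ (Fin n) // ‖x‖ = 1 }, ∑ i, ∑ j, x.1 i * M i j * x.1 j

/-- Largest eigenvalue of a symmetric real matrix, via the Rayleigh quotient. -/
def lambdaMax {n : ℕ} (M : Matrix (Fin n) (Fin n) ℝ) : ℝ :=
  ⨆ x : { x : EuclideanSpace ℝ (Fin n) // ‖x‖ = 1 }, ∑ i, ∑ j, x.1 i * M i j * x.1 j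

variable (m k₁ k₂ : ℕ)

/-- The stationary process `z_t = Z ∘ τ^t`. -/
def zproc (Z : Ω → EuclideanSpace ℝ (Fin m)) (τ : Ω → Ω) (t : ℕ) (ω : Ω) :
    EuclideanSpace ℝ (Fin m) := Z (τ^[t] ω)

/-- The one-sided dynamic principal component `f_t(a) = a'x_t`,
where `x_t = (z_t', …, z_{t-k₁}')`. -/
def comp (Z : Ω → EuclideanSpace ℝ (Fin m)) (τ : Ω → Ω)
    (a : EuclideanSpace ℝ (Fin (k₁ + 1) × Fin m)) (t : ℕ) (ω : Ω) : ℝ :=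
  ∑ h : Fin (k₁ + 1), ∑ j : Fin m, a (h, j) * zproc m Z τ (t - h.1) ω j

/-- Reconstruction `z_t^R(a,D)`: the first row of `D` is the intercept `α`, the
remaining rows are the loadings `B`. -/
def recon (Z : Ω → EuclideanSpace ℝ (Fin m)) (τ : Ω → Ω)
    (a : EuclideanSpace ℝ (Fin (k₁ + 1) × Fin m))
    (D : Matrix (Fin (k₂ + 2)) (Fin m) ℝ) (t : ℕ) (ω : Ω) :
    EuclideanSpace ℝ (Fin m) :=
  (WithLp.equiv 2 (Fin m → ℝ)).symm fun j =>
    D 0 j + ∑ h : Fin (k₂ + 1), D h.succ j * comp m k₁ Z τ a (t - h.1) ω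

/-- Population mean squared reconstruction error `MSE₀(a,D)`. -/
def MSE₀ (μ : Measure Ω) (Z : Ω → EuclideanSpace ℝ (Fin m)) (τ : Ω → Ω)
    (a : EuclideanSpace ℝ (Fin (k₁ + 1) × Fin m))
    (D : Matrix (Fin (k₂ + 2)) (Fin m) ℝ) : ℝ :=
  ∫ ω, ‖zproc m Z τ (k₁ + k₂) ω - recon m k₁ k₂ Z τ a D (k₁ + k₂) ω‖ ^ 2 ∂μ

/-- Sample mean squared reconstruction error `MSE_T(a,D)`. -/
def MSE (Z : Ω → EuclideanSpace ℝ (Fin m)) (τ : Ω → Ω) (T : ℕ)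
    (a : EuclideanSpace ℝ (Fin (k₁ + 1) × Fin m))
    (D : Matrix (Fin (k₂ + 2)) (Fin m) ℝ) (ω : Ω) : ℝ :=
  ((T : ℝ) - (k₁ + k₂))⁻¹ *
    ∑ t ∈ Finset.Ioc (k₁ + k₂) T,
      ‖zproc m Z τ t ω - recon m k₁ k₂ Z τ a D t ω‖ ^ 2

/-- Condition 1: no deterministic linear relation between `f_t(a), …, f_{t-k₂}(a)`
and a constant, uniformly over unit vectors `a`. -/
def Condition1 (μ : Measure Ω) (Z : Ω → EuclideanSpace ℝ (Fin m)) (τ : Ω → Ω) : Prop :=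
  ∃ η : ℝ, η < 1 ∧
    ∀ a : EuclideanSpace ℝ (Fin (k₁ + 1) × Fin m), ‖a‖ = 1 →
      ∀ v : Fin (k₂ + 2) → ℝ, v ≠ 0 →
        (μ {ω | ∑ h : Fin (k₂ + 1),
            v h.castSucc * comp m k₁ Z τ a (k₁ + k₂ - h.1) ω
              = v (Fin.last (k₂ + 1))}).toReal ≤ η

/-- The row `w_t(a) = (1, f_t(a), f_{t-1}(a), …, f_{t-k₂}(a))`. -/
def wvec (Z : Ω → EuclideanSpace ℝ (Fin m)) (τ : Ω → Ω)
    (a : EuclideanSpace ℝ (Fin (k₁ + 1) × Fin m)) (t : ℕ) (i : Fin (k₂ + 2)) (ω : Ω) : ℝ :=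
  if i.1 = 0 then 1 else comp m k₁ Z τ a (t - (i.1 - 1)) ω

/-- The population second-moment matrix `S(a) = 𝔼[w_t(a) w_t(a)']`. -/
def Smat (μ : Measure Ω) (Z : Ω → EuclideanSpace ℝ (Fin m)) (τ : Ω → Ω)
    (a : EuclideanSpace ℝ (Fin (k₁ + 1) × Fin m)) :
    Matrix (Fin (k₂ + 2)) (Fin (k₂ + 2)) ℝ :=
  fun i i' => ∫ ω, wvec m k₁ k₂ Z τ a (k₁ + k₂) i ω * wvec m k₁ k₂ Z τ a (k₁ + k₂) i' ω ∂μ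

/-- The sample second-moment matrix `F_{k₁,k₂}(a)'F_{k₁,k₂}(a)/(T-(k₁+k₂))`. -/
def Ssamp (Z : Ω → EuclideanSpace ℝ (Fin m)) (τ : Ω → Ω) (T : ℕ)
    (a : EuclideanSpace ℝ (Fin (k₁ + 1) × Fin m)) (ω : Ω) :
    Matrix (Fin (k₂ + 2)) (Fin (k₂ + 2)) ℝ :=
  fun i i' => ((T : ℝ) - (k₁ + k₂))⁻¹ *
    ∑ t ∈ Finset.Ioc (k₁ + k₂) T, wvec m k₁ k₂ Z τ a t i ω * wvec m k₁ k₂ Z τ a t i' ω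

/-- The set `𝓘` of minimizers of the population MSE. -/
def minimizers (μ : Measure Ω) (Z : Ω → EuclideanSpace ℝ (Fin m)) (τ : Ω → Ω) :
    Set ((EuclideanSpace ℝ (Fin (k₁ + 1) × Fin m)) × Matrix (Fin (k₂ + 2)) (Fin m) ℝ) :=
  {p | ‖p.1‖ = 1 ∧ ∀ a D, ‖a‖ = 1 → MSE₀ m k₁ k₂ μ Z τ p.1 p.2 ≤ MSE₀ m k₁ k₂ μ Z τ a D}

/-- The distance `d((a,D), 𝓘)`. -/
def distToMinimizers (μ : Measure Ω) (Z : Ω → EuclideanSpace ℝ (Fin m)) (τ : Ω → Ω)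
    (a : EuclideanSpace ℝ (Fin (k₁ + 1) × Fin m))
    (D : Matrix (Fin (k₂ + 2)) (Fin m) ℝ) : ℝ :=
  ⨅ p : minimizers m k₁ k₂ μ Z τ, (‖a - p.1.1‖ + frob (D - p.1.2))

end ODPC

open Set Topology

section MaximalErgodic

variable {α : Type*} {f : α → α} {g : α → ℝ}

def birkhoffMax (f : α → α) (g : α → ℝ) : ℕ → α → ℝ
  | 0 => 0
  | N + 1 => birkhoffMax f g N ⊔ birkhoffSum f g (N + 1)

theorem birkhoffMax_nonneg (N : ℕ) (x : α) : 0 ≤ birkhoffMax f g N x := by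
  induction N with
  | zero => rfl
  | succ N ih => exact ih.trans le_sup_left

theorem birkhoffSum_le_birkhoffMax {n N : ℕ} (h : n ≤ N) (x : α) :
    birkhoffSum f g n x ≤ birkhoffMax f g N x := by
  induction N with
  | zero => simp [Nat.le_zero.1 h, birkhoffMax]
  | succ N ih =>
    rcases h.lt_or_eq with h | rfl
    · exact (ih (Nat.lt_succ_iff.1 h)).trans le_sup_left
    · exact le_sup_right

theorem exists_birkhoffMax_eq (N : ℕ) (x : α) :
    ∃ n ≤ N, birkhoffMax f g N x = birkhoffSum f g n x := by
  induction N with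
  | zero => exact ⟨0, le_rfl, rfl⟩
  | succ N ih =>
    obtain ⟨n, hn, hEq⟩ := ih
    rcases max_choice (birkhoffMax f g N x) (birkhoffSum f g (N + 1) x) with h | h
    · exact ⟨n, hn.trans N.le_succ, h.trans hEq⟩
    · exact ⟨N + 1, le_rfl, h⟩

theorem birkhoffMax_pos_iff {N : ℕ} {x : α} :
    0 < birkhoffMax f g N x ↔ ∃ n ≤ N, 0 < birkhoffSum f g n x := by
  refine ⟨fun h => ?_, fun ⟨n, hn, h⟩ => h.trans_le (birkhoffSum_le_birkhoffMax hn x)⟩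
  obtain ⟨n, hn, hEq⟩ := exists_birkhoffMax_eq (f := f) (g := g) N x
  exact ⟨n, hn, hEq ▸ h⟩

theorem birkhoffMax_sub_birkhoffMax_apply_le (N : ℕ) (x : α) :
    birkhoffMax f g N x - birkhoffMax f g N (f x) ≤
      {y | 0 < birkhoffMax f g N y}.indicator g x := by
  by_cases hx : 0 < birkhoffMax f g N x
  · rw [indicator_of_mem (show x ∈ {y | 0 < birkhoffMax f g N y} from hx)]
    obtain ⟨n, hn, hEq⟩ := exists_birkhoffMax_eq (f := f) (g := g) N x
    obtain ⟨n, rfl⟩ : ∃ n', n = n' + 1 :=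
      Nat.exists_eq_succ_of_ne_zero fun h => by simp [hEq, h] at hx
    rw [hEq, birkhoffSum_succ']
    linarith [birkhoffSum_le_birkhoffMax (f := f) (g := g) (n.le_succ.trans hn) (f x)]
  · rw [indicator_of_notMem (show x ∉ {y | 0 < birkhoffMax f g N y} from hx)]
    linarith [birkhoffMax_nonneg (f := f) (g := g) N (f x)]

variable [MeasurableSpace α] {μ : Measure α}

theorem measurable_birkhoffSum (hf : Measurable f) (hg : Measurable g) (n : ℕ) :
    Measurable (birkhoffSum f g n) :=
  Finset.measurable_sum _ fun k _ => hg.comp (hf.iterate k)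

theorem integrable_birkhoffSum (hf : MeasurePreserving f μ μ) (hg : Integrable g μ) (n : ℕ) :
    Integrable (birkhoffSum f g n) μ :=
  integrable_finsetSum _ fun k _ => (hf.iterate k).integrable_comp_of_integrable hg

theorem measurable_birkhoffMax (hf : Measurable f) (hg : Measurable g) (N : ℕ) :
    Measurable (birkhoffMax f g N) := by
  induction N with
  | zero => exact measurable_const
  | succ N ih => exact ih.sup (measurable_birkhoffSum hf hg _)

theorem integrable_birkhoffMax (hf : MeasurePreserving f μ μ) (hg : Integrable g μ) (N : ℕ) :
    Integrable (birkhoffMax f g N) μ := by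
  induction N with
  | zero => exact integrable_zero _ _ _
  | succ N ih => exact ih.sup (integrable_birkhoffSum hf hg _)

theorem setIntegral_birkhoffMax_pos_nonneg (hf : MeasurePreserving f μ μ) (hgm : Measurable g)
    (hg : Integrable g μ) (N : ℕ) :
    0 ≤ ∫ x in {x | 0 < birkhoffMax f g N x}, g x ∂μ := by
  have hMm := measurable_birkhoffMax hf.measurable hgm N
  have hM := integrable_birkhoffMax hf hg N
  have hMf := hf.integrable_comp_of_integrable hM
  have hE : MeasurableSet {x | 0 < birkhoffMax f g N x} := measurableSet_lt measurable_const hMm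
  have hinv : ∫ x, birkhoffMax f g N (f x) ∂μ = ∫ x, birkhoffMax f g N x ∂μ := by
    conv_rhs => rw [← hf.map_eq]
    exact (integral_map hf.measurable.aemeasurable hMm.aestronglyMeasurable).symm
  have := integral_mono (f := fun x => birkhoffMax f g N x - birkhoffMax f g N (f x))
    (hM.sub hMf) (hg.indicator hE) (birkhoffMax_sub_birkhoffMax_apply_le N)
  rwa [integral_sub (g := fun x => birkhoffMax f g N (f x)) hM hMf, hinv, sub_self,
    integral_indicator hE] at this

/-- The maximal ergodic theorem. -/
theorem setIntegral_exists_birkhoffSum_pos_nonneg (hf : MeasurePreserving f μ μ)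
    (hgm : Measurable g) (hg : Integrable g μ) :
    0 ≤ ∫ x in {x | ∃ n, 0 < birkhoffSum f g n x}, g x ∂μ := by
  have hunion : {x | ∃ n, 0 < birkhoffSum f g n x} = ⋃ N, {x | 0 < birkhoffMax f g N x} := by
    ext x
    simp only [mem_ofPred_eq, mem_iUnion, birkhoffMax_pos_iff]
    exact ⟨fun ⟨n, h⟩ => ⟨n, n, le_rfl, h⟩, fun ⟨_, n, _, h⟩ => ⟨n, h⟩⟩
  have hmono : Monotone fun N => {x | 0 < birkhoffMax f g N x} := fun N N' hN x hx =>
    let ⟨n, hn, h⟩ := birkhoffMax_pos_iff.1 hx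
    birkhoffMax_pos_iff.2 ⟨n, hn.trans hN, h⟩
  rw [hunion]
  exact ge_of_tendsto' (tendsto_setIntegral_of_monotone
    (fun N => measurableSet_lt measurable_const (measurable_birkhoffMax hf.measurable hgm N))
    hmono hg.integrableOn) (setIntegral_birkhoffMax_pos_nonneg hf hgm hg)

end MaximalErgodic

section PointwiseErgodic

variable {α : Type*} {f : α → α} {g : α → ℝ}

theorem bddAbove_range_birkhoffSum_apply_iff (x : α) :
    BddAbove (range fun n => birkhoffSum f g n (f x)) ↔
      BddAbove (range fun n => birkhoffSum f g n x) := by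
  simp only [bddAbove_def, forall_mem_range]
  constructor
  · rintro ⟨C, hC⟩
    refine ⟨max 0 (g x + C), fun n => ?_⟩
    cases n with
    | zero => simp [birkhoffSum_zero]
    | succ n => rw [birkhoffSum_succ']; linarith [hC n, le_max_right 0 (g x + C)]
  · rintro ⟨C, hC⟩
    exact ⟨C - g x, fun n => by linarith [hC (n + 1), birkhoffSum_succ' f g n x]⟩

variable [MeasurableSpace α] {μ : Measure α}

/-- The set where the Birkhoff sums are unbounded above is invariant, hence null or conull; on a
conull set the maximal ergodic theorem would force `0 ≤ ∫ g`. -/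
theorem Ergodic.ae_bddAbove_range_birkhoffSum (hf : Ergodic f μ) (hgm : Measurable g)
    (hg : Integrable g μ) (hneg : ∫ x, g x ∂μ < 0) :
    ∀ᵐ x ∂μ, BddAbove (range fun n => birkhoffSum f g n x) := by
  set U := {x | ¬BddAbove (range fun n => birkhoffSum f g n x)}
  have hU : MeasurableSet U :=
    (measurableSet_bddAbove_range (measurable_birkhoffSum hf.measurable hgm)).compl
  have hinv : f ⁻¹' U = U :=
    ext fun x => not_congr (bddAbove_range_birkhoffSum_apply_iff x)
  rcases hf.toPreErgodic.ae_empty_or_univ hU hinv with hnull | hconull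
  · exact ae_eq_empty.1 hnull
  · have hpos : U ⊆ {x | ∃ n, 0 < birkhoffSum f g n x} := fun x hx => by
      obtain ⟨_, ⟨n, rfl⟩, hn⟩ := not_bddAbove_iff.1 hx 0
      exact ⟨n, hn⟩
    have hrestrict : μ.restrict {x | ∃ n, 0 < birkhoffSum f g n x} = μ := by
      rw [Measure.restrict_congr_set (ae_eq_univ.2 (measure_mono_null
        (compl_subset_compl.2 hpos) (ae_eq_univ.1 hconull))), Measure.restrict_univ]
    have := setIntegral_exists_birkhoffSum_pos_nonneg hf.toMeasurePreserving hgm hg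
    rw [hrestrict] at this
    linarith

theorem Ergodic.ae_eventually_birkhoffAverage_lt [IsProbabilityMeasure μ] (hf : Ergodic f μ)
    (hgm : Measurable g) (hg : Integrable g μ) {r : ℝ} (hr : ∫ x, g x ∂μ < r) :
    ∀ᵐ x ∂μ, ∀ᶠ n in atTop, birkhoffAverage ℝ f g n x < r := by
  obtain ⟨s, hgs, hsr⟩ := exists_between hr
  have hshift : ∫ x, (g x - s) ∂μ < 0 := by
    rw [integral_sub hg (integrable_const s), integral_const, probReal_univ, one_smul]
    linarith
  filter_upwards [hf.ae_bddAbove_range_birkhoffSum (hgm.sub measurable_const)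
    (hg.sub (integrable_const s)) hshift] with x ⟨C, hC⟩
  have hlim : Tendsto (fun n : ℕ => s + C / n) atTop (𝓝 s) := by
    simpa using tendsto_const_nhds.add (tendsto_const_div_atTop_nhds_zero_nat C)
  filter_upwards [hlim.eventually (gt_mem_nhds hsr), eventually_gt_atTop 0] with n hn hn0
  have hsum : birkhoffSum f g n x - n * s ≤ C := by
    simpa [birkhoffSum, Finset.sum_sub_distrib] using hC ⟨n, rfl⟩
  have hn0' : (0 : ℝ) < n := Nat.cast_pos.2 hn0
  have : birkhoffAverage ℝ f g n x ≤ s + C / n := by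
    rw [birkhoffAverage, smul_eq_mul, inv_mul_le_iff₀ hn0', mul_add, mul_div_cancel₀ _ hn0'.ne']
    linarith
  linarith

theorem Ergodic.ae_tendsto_birkhoffAverage_of_measurable [IsProbabilityMeasure μ]
    (hf : Ergodic f μ) (hgm : Measurable g) (hg : Integrable g μ) :
    ∀ᵐ x ∂μ, Tendsto (birkhoffAverage ℝ f g · x) atTop (𝓝 (∫ x, g x ∂μ)) := by
  have hupper : ∀ {g : α → ℝ}, Measurable g → Integrable g μ →
      ∀ᵐ x ∂μ, ∀ q : ℚ, ∫ x, g x ∂μ < q → ∀ᶠ n in atTop, birkhoffAverage ℝ f g n x < q :=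
    fun hgm hg => ae_all_iff.2 fun q => eventually_imp_distrib_left.2
      (hf.ae_eventually_birkhoffAverage_lt hgm hg)
  filter_upwards [hupper hgm hg, hupper hgm.neg hg.neg] with x hx hx'
  refine tendsto_order.2 ⟨fun a ha => ?_, fun b hb => ?_⟩
  · obtain ⟨q, hq, hqa⟩ := exists_rat_btwn (neg_lt_neg ha)
    refine (hx' q (by rwa [Pi.neg_def, integral_neg])).mono fun n hn => ?_
    rw [birkhoffAverage_neg, Pi.neg_apply, Pi.neg_apply] at hn
    linarith
  · obtain ⟨q, hq, hqb⟩ := exists_rat_btwn hb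
    exact (hx q hq).mono fun n hn => hn.trans hqb

theorem Ergodic.ae_tendsto_birkhoffAverage [IsProbabilityMeasure μ] (hf : Ergodic f μ)
    (hg : Integrable g μ) :
    ∀ᵐ x ∂μ, Tendsto (birkhoffAverage ℝ f g · x) atTop (𝓝 (∫ x, g x ∂μ)) := by
  have hae := hg.1.ae_eq_mk
  have hsame : ∀ᵐ x ∂μ, ∀ n, birkhoffAverage ℝ f g n x = birkhoffAverage ℝ f (hg.1.mk g) n x :=
    ae_all_iff.2 (hf.quasiMeasurePreserving.birkhoffAverage_ae_eq_of_ae_eq ℝ hae)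
  filter_upwards [hf.ae_tendsto_birkhoffAverage_of_measurable hg.1.stronglyMeasurable_mk.measurable
    (hg.congr hae), hsame] with x hx hx'
  rw [integral_congr_ae hae]
  exact hx.congr fun n => (hx' n).symm

end PointwiseErgodic

section SecondMoments

variable {α ι : Type*} [Fintype ι] {f : α → α} {Y : ι → α → ℝ} {c : ι → ℝ}

theorem abs_sum_sum_mul_mul_le (M : ι → ι → ℝ) (hc : ∀ i, |c i| ≤ 1) :
    |∑ i, ∑ j, c i * M i j * c j| ≤ ∑ i, ∑ j, |M i j| := by
  refine (Finset.abs_sum_le_sum_abs _ _).trans (Finset.sum_le_sum fun i _ => ?_)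
  refine (Finset.abs_sum_le_sum_abs _ _).trans (Finset.sum_le_sum fun j _ => ?_)
  rw [abs_mul, abs_mul]
  calc |c i| * |M i j| * |c j| ≤ 1 * |M i j| * 1 := by gcongr <;> simp [hc]
    _ = |M i j| := by ring

theorem birkhoffAverage_sq_sum_mul (f : α → α) (c : ι → ℝ) (Y : ι → α → ℝ) (n : ℕ) (x : α) :
    birkhoffAverage ℝ f (fun y => (∑ i, c i * Y i y) ^ 2) n x =
      ∑ i, ∑ j, c i * birkhoffAverage ℝ f (fun y => Y i y * Y j y) n x * c j := by
  simp only [birkhoffAverage, birkhoffSum, smul_eq_mul, sq, Finset.mul_sum, Finset.sum_mul]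
  rw [Finset.sum_comm]
  refine Finset.sum_congr rfl fun i _ => ?_
  rw [Finset.sum_comm]
  refine Finset.sum_congr rfl fun j _ => Finset.sum_congr rfl fun k _ => by ring

variable [MeasurableSpace α] {μ : Measure α}

theorem integral_sq_sum_mul (c : ι → ℝ) (hY : ∀ i, MemLp (Y i) 2 μ) :
    ∫ x, (∑ i, c i * Y i x) ^ 2 ∂μ = ∑ i, ∑ j, c i * (∫ x, Y i x * Y j x ∂μ) * c j := by
  have hYY : ∀ i j, Integrable (fun x => Y i x * Y j x) μ := fun i j => (hY i).integrable_mul (hY j)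
  simp only [sq, Finset.sum_mul_sum]
  rw [integral_finsetSum _ fun i _ => integrable_finsetSum _ fun j _ =>
    ((hYY i j).const_mul (c i * c j)).congr (Eventually.of_forall fun x => by ring)]
  refine Finset.sum_congr rfl fun i _ => ?_
  rw [integral_finsetSum _ fun j _ =>
    ((hYY i j).const_mul (c i * c j)).congr (Eventually.of_forall fun x => by ring)]
  refine Finset.sum_congr rfl fun j _ => ?_
  calc ∫ x, c i * Y i x * (c j * Y j x) ∂μ = ∫ x, c i * c j * (Y i x * Y j x) ∂μ :=
        integral_congr_ae (Eventually.of_forall fun x => by ring)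
    _ = _ := by rw [integral_const_mul]; ring

def secondMomentDeviation (f : α → α) (μ : Measure α) (Y : ι → α → ℝ) (n : ℕ) (x : α) : ℝ :=
  ∑ i, ∑ j, |birkhoffAverage ℝ f (fun y => Y i y * Y j y) n x - ∫ y, Y i y * Y j y ∂μ|

theorem secondMomentDeviation_nonneg (f : α → α) (μ : Measure α) (Y : ι → α → ℝ) (n : ℕ)
    (x : α) : 0 ≤ secondMomentDeviation f μ Y n x :=
  Finset.sum_nonneg fun _ _ => Finset.sum_nonneg fun _ _ => abs_nonneg _

theorem abs_birkhoffAverage_sq_sum_sub_integral_le (hY : ∀ i, MemLp (Y i) 2 μ)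
    (hc : ∀ i, |c i| ≤ 1) (n : ℕ) (x : α) :
    |birkhoffAverage ℝ f (fun y => (∑ i, c i * Y i y) ^ 2) n x -
        ∫ y, (∑ i, c i * Y i y) ^ 2 ∂μ| ≤ secondMomentDeviation f μ Y n x := by
  rw [birkhoffAverage_sq_sum_mul, integral_sq_sum_mul c hY]
  simp only [← Finset.sum_sub_distrib, ← mul_sub, ← sub_mul]
  exact abs_sum_sum_mul_mul_le _ hc

theorem Ergodic.ae_tendsto_secondMomentDeviation [IsProbabilityMeasure μ] (hf : Ergodic f μ)
    (hY : ∀ i, MemLp (Y i) 2 μ) :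
    ∀ᵐ x ∂μ, Tendsto (secondMomentDeviation f μ Y · x) atTop (𝓝 0) := by
  have hYY : ∀ i j, Integrable (fun x => Y i x * Y j x) μ := fun i j => (hY i).integrable_mul (hY j)
  filter_upwards [ae_all_iff.2 fun i => ae_all_iff.2 fun j =>
    hf.ae_tendsto_birkhoffAverage (hYY i j)] with x hx
  simpa [secondMomentDeviation] using tendsto_finsetSum _ fun i _ => tendsto_finsetSum _ fun j _ =>
    ((hx i j).sub_const (∫ y, Y i y * Y j y ∂μ)).abs

end SecondMoments

theorem abs_ciInf_sub_ciInf_le {ι : Sort*} {u v : ι → ℝ} {δ : ℝ} (hv : BddBelow (range v))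
    (hδ : 0 ≤ δ) (h : ∀ i, |u i - v i| ≤ δ) : |(⨅ i, u i) - ⨅ i, v i| ≤ δ := by
  rcases isEmpty_or_nonempty ι with hι | hι
  · simpa [Real.iInf_of_isEmpty] using hδ
  have hu : BddBelow (range u) := ⟨(⨅ i, v i) - δ, forall_mem_range.2 fun i => by
    linarith [ciInf_le hv i, (abs_le.1 (h i)).1]⟩
  refine abs_sub_le_iff.2 ⟨?_, ?_⟩
  · have : (⨅ i, u i) - δ ≤ ⨅ i, v i := le_ciInf fun i => by
      linarith [ciInf_le hu i, (abs_le.1 (h i)).2]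
    linarith
  · have : (⨅ i, v i) - δ ≤ ⨅ i, u i := le_ciInf fun i => by
      linarith [ciInf_le hv i, (abs_le.1 (h i)).1]
    linarith

namespace ODPC

section SampleSecondMoments

variable {Ω : Type*} (m k₁ k₂ : ℕ)

/-- `x'w_{k₁+k₂}(a)` is a combination of these variables, which depend neither on `a` nor on `x`;
its coefficients are `lagCoeff a x`. -/
def lagCoord (Z : Ω → EuclideanSpace ℝ (Fin m)) (τ : Ω → Ω) :
    Option (Fin (k₂ + 1) × (Fin (k₁ + 1) × Fin m)) → Ω → ℝ
  | none => fun _ => 1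
  | some (l, h, j) => fun ω => zproc m Z τ (k₁ + k₂ - l - h) ω j

def lagCoeff (a : EuclideanSpace ℝ (Fin (k₁ + 1) × Fin m))
    (x : EuclideanSpace ℝ (Fin (k₂ + 2))) :
    Option (Fin (k₂ + 1) × (Fin (k₁ + 1) × Fin m)) → ℝ
  | none => x 0
  | some (l, p) => x l.succ * a p

theorem sum_mul_wvec_eq_sum_lagCoeff_mul_lagCoord (Z : Ω → EuclideanSpace ℝ (Fin m)) (τ : Ω → Ω)
    (a : EuclideanSpace ℝ (Fin (k₁ + 1) × Fin m)) (x : EuclideanSpace ℝ (Fin (k₂ + 2))) (ω : Ω) :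
    ∑ i, x i * wvec m k₁ k₂ Z τ a (k₁ + k₂) i ω =
      ∑ o, lagCoeff m k₁ k₂ a x o * lagCoord m k₁ k₂ Z τ o ω := by
  rw [Fin.sum_univ_succ, Fintype.sum_option, Fintype.sum_prod_type]
  simp [wvec, comp, lagCoeff, lagCoord, Finset.mul_sum, Fintype.sum_prod_type, mul_assoc]

theorem abs_lagCoeff_le_one {a : EuclideanSpace ℝ (Fin (k₁ + 1) × Fin m)}
    {x : EuclideanSpace ℝ (Fin (k₂ + 2))} (ha : ‖a‖ = 1) (hx : ‖x‖ = 1) :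
    ∀ o, |lagCoeff m k₁ k₂ a x o| ≤ 1 := by
  have hx' : ∀ i, |x i| ≤ 1 := fun i => hx ▸ PiLp.norm_apply_le x i
  rintro (_ | ⟨l, p⟩)
  · exact hx' 0
  · rw [lagCoeff, abs_mul]
    exact mul_le_one₀ (hx' _) (abs_nonneg _) (ha ▸ PiLp.norm_apply_le a p)

variable {Z : Ω → EuclideanSpace ℝ (Fin m)} {τ : Ω → Ω}
  {a : EuclideanSpace ℝ (Fin (k₁ + 1) × Fin m)}

theorem wvec_eq_wvec_iterate {t : ℕ} (ht : k₁ + k₂ ≤ t) (i : Fin (k₂ + 2)) (ω : Ω) :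
    wvec m k₁ k₂ Z τ a t i ω = wvec m k₁ k₂ Z τ a (k₁ + k₂) i (τ^[t - (k₁ + k₂)] ω) := by
  simp only [wvec, comp, zproc, ← Function.iterate_add_apply]
  split_ifs
  · rfl
  · refine Finset.sum_congr rfl fun h _ => Finset.sum_congr rfl fun j _ => ?_
    have := h.isLt
    have := i.isLt
    rw [show t - (i - 1) - h = k₁ + k₂ - (i - 1) - h + (t - (k₁ + k₂)) by omega]

/-- The orbit starts at `τ ω` because the sample starts at time `k₁ + k₂ + 1`. -/
theorem Ssamp_eq_birkhoffAverage {T : ℕ} (hT : k₁ + k₂ ≤ T) (ω : Ω) (i j : Fin (k₂ + 2)) :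
    Ssamp m k₁ k₂ Z τ T a ω i j =
      birkhoffAverage ℝ τ (fun ω => wvec m k₁ k₂ Z τ a (k₁ + k₂) i ω *
        wvec m k₁ k₂ Z τ a (k₁ + k₂) j ω) (T - (k₁ + k₂)) (τ ω) := by
  rw [Ssamp, birkhoffAverage, birkhoffSum, smul_eq_mul, Nat.cast_sub hT, Nat.cast_add,
    ← Finset.Ico_add_one_add_one_eq_Ioc, Finset.sum_Ico_eq_sum_range]
  congr 1
  refine Finset.sum_congr (by congr 1; omega) fun s _ => ?_
  rw [wvec_eq_wvec_iterate m k₁ k₂ (t := k₁ + k₂ + 1 + s) (by omega) i,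
    wvec_eq_wvec_iterate m k₁ k₂ (t := k₁ + k₂ + 1 + s) (by omega) j,
    ← Function.iterate_succ_apply, show k₁ + k₂ + 1 + s - (k₁ + k₂) = s.succ by omega]

theorem sum_mul_Ssamp_mul_eq_birkhoffAverage {T : ℕ} (hT : k₁ + k₂ ≤ T)
    (x : EuclideanSpace ℝ (Fin (k₂ + 2))) (ω : Ω) :
    ∑ i, ∑ j, x i * Ssamp m k₁ k₂ Z τ T a ω i j * x j =
      birkhoffAverage ℝ τ (fun ω => (∑ o, lagCoeff m k₁ k₂ a x o * lagCoord m k₁ k₂ Z τ o ω) ^ 2)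
        (T - (k₁ + k₂)) (τ ω) := by
  simp_rw [Ssamp_eq_birkhoffAverage m k₁ k₂ hT, ← sum_mul_wvec_eq_sum_lagCoeff_mul_lagCoord,
    birkhoffAverage_sq_sum_mul]

variable [MeasurableSpace Ω] {μ : Measure Ω}

theorem memLp_zproc (hZ : MemLp Z 2 μ) (hτ : MeasurePreserving τ μ μ) (t : ℕ) (j : Fin m) :
    MemLp (fun ω => zproc m Z τ t ω j) 2 μ :=
  have hZj : MemLp (fun ω => Z ω j) 2 μ := (EuclideanSpace.proj (𝕜 := ℝ) j).comp_memLp' hZ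
  hZj.comp_measurePreserving (hτ.iterate t)

section FiniteMeasure

variable [IsFiniteMeasure μ]

theorem memLp_lagCoord (hZ : MemLp Z 2 μ) (hτ : MeasurePreserving τ μ μ) :
    ∀ o, MemLp (lagCoord m k₁ k₂ Z τ o) 2 μ
  | none => memLp_const 1
  | some (_, _, j) => memLp_zproc m hZ hτ _ j

theorem memLp_wvec (hZ : MemLp Z 2 μ) (hτ : MeasurePreserving τ μ μ) (t : ℕ) (i : Fin (k₂ + 2)) :
    MemLp (wvec m k₁ k₂ Z τ a t i) 2 μ := by
  by_cases hi : (i : ℕ) = 0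
  · have hw : wvec m k₁ k₂ Z τ a t i = fun _ => 1 := funext fun _ => if_pos hi
    exact hw ▸ memLp_const 1
  · have hw : wvec m k₁ k₂ Z τ a t i = comp m k₁ Z τ a (t - (i - 1)) := funext fun _ => if_neg hi
    rw [hw]
    exact memLp_finsetSum _ fun h _ => memLp_finsetSum _ fun j _ =>
      (memLp_zproc m hZ hτ _ j).const_mul _

theorem sum_mul_Smat_mul_eq_integral (hZ : MemLp Z 2 μ) (hτ : MeasurePreserving τ μ μ)
    (x : EuclideanSpace ℝ (Fin (k₂ + 2))) :
    ∑ i, ∑ j, x i * Smat m k₁ k₂ μ Z τ a i j * x j =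
      ∫ ω, (∑ o, lagCoeff m k₁ k₂ a x o * lagCoord m k₁ k₂ Z τ o ω) ^ 2 ∂μ := by
  simp_rw [← sum_mul_wvec_eq_sum_lagCoeff_mul_lagCoord,
    integral_sq_sum_mul _ (memLp_wvec m k₁ k₂ hZ hτ _), Smat]

theorem sum_mul_Smat_mul_nonneg (hZ : MemLp Z 2 μ) (hτ : MeasurePreserving τ μ μ)
    (x : EuclideanSpace ℝ (Fin (k₂ + 2))) :
    0 ≤ ∑ i, ∑ j, x i * Smat m k₁ k₂ μ Z τ a i j * x j := by
  rw [sum_mul_Smat_mul_eq_integral m k₁ k₂ hZ hτ]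
  exact integral_nonneg fun _ => sq_nonneg _

theorem abs_lambdaMin_Ssamp_sub_lambdaMin_Smat_le (hZ : MemLp Z 2 μ)
    (hτ : MeasurePreserving τ μ μ) (ha : ‖a‖ = 1) {T : ℕ} (hT : k₁ + k₂ ≤ T) (ω : Ω) :
    |lambdaMin (Ssamp m k₁ k₂ Z τ T a ω) - lambdaMin (Smat m k₁ k₂ μ Z τ a)| ≤
      secondMomentDeviation τ μ (lagCoord m k₁ k₂ Z τ) (T - (k₁ + k₂)) (τ ω) := by
  refine abs_ciInf_sub_ciInf_le
    ⟨0, forall_mem_range.2 fun x => sum_mul_Smat_mul_nonneg m k₁ k₂ hZ hτ x.1⟩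
    (secondMomentDeviation_nonneg _ _ _ _ _) fun x => ?_
  rw [sum_mul_Ssamp_mul_eq_birkhoffAverage m k₁ k₂ hT, sum_mul_Smat_mul_eq_integral m k₁ k₂ hZ hτ]
  exact abs_birkhoffAverage_sq_sum_sub_integral_le (memLp_lagCoord m k₁ k₂ hZ hτ)
    (abs_lagCoeff_le_one m k₁ k₂ ha x.2) _ _

theorem abs_iInf_lambdaMin_Ssamp_sub_iInf_lambdaMin_Smat_le (hZ : MemLp Z 2 μ)
    (hτ : MeasurePreserving τ μ μ) {T : ℕ} (hT : k₁ + k₂ ≤ T) (ω : Ω) :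
    |(⨅ a : { a : EuclideanSpace ℝ (Fin (k₁ + 1) × Fin m) // ‖a‖ = 1 },
        lambdaMin (Ssamp m k₁ k₂ Z τ T a.1 ω)) -
      ⨅ a : { a : EuclideanSpace ℝ (Fin (k₁ + 1) × Fin m) // ‖a‖ = 1 },
        lambdaMin (Smat m k₁ k₂ μ Z τ a.1)| ≤
      secondMomentDeviation τ μ (lagCoord m k₁ k₂ Z τ) (T - (k₁ + k₂)) (τ ω) :=
  abs_ciInf_sub_ciInf_le ⟨0, forall_mem_range.2 fun _ =>
      Real.iInf_nonneg fun x => sum_mul_Smat_mul_nonneg m k₁ k₂ hZ hτ x.1⟩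
    (secondMomentDeviation_nonneg _ _ _ _ _) fun a =>
      abs_lambdaMin_Ssamp_sub_lambdaMin_Smat_le m k₁ k₂ hZ hτ a.2 hT ω

end FiniteMeasure

theorem ae_tendsto_iInf_lambdaMin_Ssamp [IsProbabilityMeasure μ] (hτ : Ergodic τ μ)
    (hZ : MemLp Z 2 μ) :
    ∀ᵐ ω ∂μ, Tendsto (fun T => ⨅ a : { a : EuclideanSpace ℝ (Fin (k₁ + 1) × Fin m) // ‖a‖ = 1 },
        lambdaMin (Ssamp m k₁ k₂ Z τ T a.1 ω)) atTop
      (𝓝 (⨅ a : { a : EuclideanSpace ℝ (Fin (k₁ + 1) × Fin m) // ‖a‖ = 1 },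
        lambdaMin (Smat m k₁ k₂ μ Z τ a.1))) := by
  filter_upwards [hτ.quasiMeasurePreserving.ae (hτ.ae_tendsto_secondMomentDeviation
    (memLp_lagCoord m k₁ k₂ hZ hτ.toMeasurePreserving))] with ω hω
  refine tendsto_sub_nhds_zero_iff.1
    (squeeze_zero_norm' ?_ (hω.comp (tendsto_sub_atTop_nat (k₁ + k₂))))
  filter_upwards [eventually_ge_atTop (k₁ + k₂)] with T hT
  exact abs_iInf_lambdaMin_Ssamp_sub_iInf_lambdaMin_Smat_le m k₁ k₂ hZ hτ.toMeasurePreserving hT ω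

end SampleSecondMoments

variable {Ω : Type*} [MeasurableSpace Ω] (m k₁ k₂ : ℕ)

variable (μ : Measure Ω) [IsProbabilityMeasure μ]

theorem stmt6 (τ : Ω → Ω) (hτ : Ergodic τ μ)
    (Z : Ω → EuclideanSpace ℝ (Fin m)) (hZ : MemLp Z 2 μ) :
    ∀ᵐ ω ∂μ,
      (⨅ a : { a : EuclideanSpace ℝ (Fin (k₁ + 1) × Fin m) // ‖a‖ = 1 },
        lambdaMin (Smat m k₁ k₂ μ Z τ a.1)) ≤
      liminf (fun T => ⨅ a : { a : EuclideanSpace ℝ (Fin (k₁ + 1) × Fin m) // ‖a‖ = 1 },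
        lambdaMin (Ssamp m k₁ k₂ Z τ T a.1 ω)) atTop := by
  filter_upwards [ae_tendsto_iInf_lambdaMin_Ssamp m k₁ k₂ hτ hZ] with ω hω
  exact hω.liminf_eq.ge

end ODPC
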